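/- arXiv:2107.08630 — 4 statements merged into one kernel-verified Lean document; each statement's English description precedes it below -/
import Mathlib

section
/- Under the top agent property and limited complementarity, the graph G produced by the ordered match algorithm has the property that every agent weakly prefers G to any graph G' obtained from G by deleting a subset of its edges. -/
open Finset

/-- Closed neighborhood of `k` in the undirected graph with edge set `E`. -/
def nbhd {N : ℕ} (E : Finset (Fin N × Fin N)) (k : Fin N) : Finset (Fin N) :=
  insert k (Finset.univ.filter (fun m => (k, m) ∈ E ∨ (m, k) ∈ E))

/-- Strict preference of agent `k` derived from the weak preference `W` over coalitions. -/
def SPref {N : ℕ} (W : Fin N → Finset (Fin N) → Finset (Fin N) → Prop)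
    (k : Fin N) (S T : Finset (Fin N)) : Prop :=
  W k S T ∧ ¬ W k T S

/-- Each agent's weak preference over coalitions containing it is complete and transitive. -/
def TotalPreorderOn {N : ℕ}
    (W : Fin N → Finset (Fin N) → Finset (Fin N) → Prop) : Prop :=
  ∀ k : Fin N,
    (∀ S T : Finset (Fin N), k ∈ S → k ∈ T → W k S T ∨ W k T S) ∧
    (∀ S T R : Finset (Fin N), W k S T → W k T R → W k S R)

/-- Top agent property with agents labeled in decreasing order of the common preference:
every agent strictly prefers the lower-labeled of two other agents. -/
def TopAgentLabeled {N : ℕ}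
    (W : Fin N → Finset (Fin N) → Finset (Fin N) → Prop) : Prop :=
  ∀ k i j : Fin N, i ≠ k → j ≠ k → i < j →
    ∀ S : Finset (Fin N), k ∈ S → i ∉ S → j ∉ S →
      SPref W k (insert i S) (insert j S)

/-- Limited complementarity: if adding agent `i` strictly hurts `k`, then adding any nonempty
subset of agents labeled (i.e. ranked) weakly below `i` strictly hurts `k`. -/
def LimitedComp {N : ℕ}
    (W : Fin N → Finset (Fin N) → Finset (Fin N) → Prop) : Prop :=
  ∀ (k : Fin N) (S : Finset (Fin N)) (i : Fin N), k ∈ S →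
    SPref W k S (insert i S) →
    ∀ S' : Finset (Fin N), S' ⊆ Finset.univ.filter (fun j => i ≤ j) → S'.Nonempty →
      SPref W k S (S ∪ S')

open scoped Classical in
/-- One proposal step of the ordered match algorithm on edge set `E` for the pair `p = (n, l)`:
the edge is added iff both agents weakly prefer adding the other given current neighborhoods. -/
noncomputable def omStep {N : ℕ}
    (W : Fin N → Finset (Fin N) → Finset (Fin N) → Prop)
    (E : Finset (Fin N × Fin N)) (p : Fin N × Fin N) : Finset (Fin N × Fin N) :=
  if W p.1 (insert p.2 (nbhd E p.1)) (nbhd E p.1) ∧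
     W p.2 (insert p.1 (nbhd E p.2)) (nbhd E p.2)
  then insert p E else E

/-- The list of proposal pairs `(n, l)` with `n < l`, in the order visited by ordered match. -/
def pairList (N : ℕ) : List (Fin N × Fin N) :=
  (List.finRange N).flatMap (fun n =>
    ((List.finRange N).filter (fun l => n < l)).map (fun l => (n, l)))

/-- The ordered match algorithm: fold the proposal steps over all pairs in order. -/
noncomputable def orderedMatch {N : ℕ}
    (W : Fin N → Finset (Fin N) → Finset (Fin N) → Prop) : Finset (Fin N × Fin N) :=
  (pairList N).foldl (omStep W) ∅

/-- A coalition `C` with deviating graph `E'` blocks the graph `E`: new edges are only within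
the coalition, edges between non-members are untouched, all members are weakly better off and
some member is strictly better off. -/
def Blocks {N : ℕ} (W : Fin N → Finset (Fin N) → Finset (Fin N) → Prop)
    (E : Finset (Fin N × Fin N)) (C : Finset (Fin N))
    (E' : Finset (Fin N × Fin N)) : Prop :=
  (∀ e ∈ E', e ∉ E → e.1 ∈ C ∧ e.2 ∈ C) ∧
  (∀ e : Fin N × Fin N, e.1 ∉ C → e.2 ∉ C → (e ∈ E ↔ e ∈ E')) ∧
  (∀ m ∈ C, W m (nbhd E' m) (nbhd E m)) ∧
  (∃ m ∈ C, SPref W m (nbhd E' m) (nbhd E m))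

/-- Strong stability: no nonempty coalition has a blocking deviation. -/
def StronglyStable {N : ℕ} (W : Fin N → Finset (Fin N) → Finset (Fin N) → Prop)
    (E : Finset (Fin N × Fin N)) : Prop :=
  ¬ ∃ (C : Finset (Fin N)) (E' : Finset (Fin N × Fin N)), C.Nonempty ∧ Blocks W E C E'


/-!
The algorithm examines pairs in lexicographic order, so when the edge `{m, a}` of the outcome `G`
is examined, the neighbours `m` already has are exactly its `G`-neighbours below `a`. Hence `m`
weakly gains each neighbour when they are added in increasing order, and weakly prefers its
`G`-neighbourhood to each of its initial segments. Deleting edges leaves `m` with a subset of its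
`G`-neighbourhood, and by the top agent property exchanging a neighbour for a smaller one never
hurts `m`, so every such subset is weakly worse than the initial segment of the same size.
-/

section Fold

variable {α : Type*} {step : Finset α → α → Finset α}

theorem subset_foldl_of_subset_step (hmono : ∀ E p, E ⊆ step E p) (L : List α)
    (E : Finset α) : E ⊆ L.foldl step E := by
  induction L generalizing E with
  | nil => exact subset_rfl
  | cons p L ih => exact (hmono E p).trans (ih _)

theorem foldl_subset_of_step_subset_insert [DecidableEq α]
    (hins : ∀ E p, step E p ⊆ insert p E) (L : List α) (E : Finset α) :
    L.foldl step E ⊆ E ∪ L.toFinset := by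
  induction L generalizing E with
  | nil => simp
  | cons p L ih =>
    refine (ih _).trans (union_subset ((hins E p).trans ?_) ?_) <;> intro q <;>
      simp only [mem_insert, mem_union, List.mem_toFinset, List.mem_cons] <;> tauto

theorem mem_foldl_iff_of_notMem [DecidableEq α] (hmono : ∀ E p, E ⊆ step E p)
    (hins : ∀ E p, step E p ⊆ insert p E) {L : List α} {q : α} (hq : q ∉ L)
    (E : Finset α) :
    q ∈ L.foldl step E ↔ q ∈ E := by
  refine ⟨fun h => ?_, fun h => subset_foldl_of_subset_step hmono L E h⟩
  simpa [hq] using foldl_subset_of_step_subset_insert hins L E h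

theorem mem_foldl_prefix_iff [DecidableEq α] (hmono : ∀ E p, E ⊆ step E p)
    (hins : ∀ E p, step E p ⊆ insert p E) {s t : List α} {f : α} (hnd : (s ++ f :: t).Nodup)
    (q : α) :
    q ∈ s.foldl step ∅ ↔ q ∈ (s ++ f :: t).foldl step ∅ ∧ q ∈ s := by
  rw [List.foldl_append]
  constructor
  · intro h
    refine ⟨subset_foldl_of_subset_step hmono _ _ h, ?_⟩
    simpa using foldl_subset_of_step_subset_insert hins s ∅ h
  · rintro ⟨h, hqs⟩
    have hq : q ∉ f :: t := List.disjoint_of_nodup_append hnd hqs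
    rw [mem_foldl_iff_of_notMem hmono hins hq] at h
    exact h

theorem mem_step_foldl_prefix [DecidableEq α] (hmono : ∀ E p, E ⊆ step E p)
    (hins : ∀ E p, step E p ⊆ insert p E) {s t : List α} {f : α} (hnd : (s ++ f :: t).Nodup)
    (hf : f ∈ (s ++ f :: t).foldl step ∅) :
    f ∈ step (s.foldl step ∅) f ∧ f ∉ s.foldl step ∅ := by
  have hft : f ∉ t := (List.nodup_cons.mp (List.nodup_append.mp hnd).2.1).1
  have hfs : f ∉ s := fun h => List.disjoint_of_nodup_append hnd h List.mem_cons_self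
  rw [List.foldl_append, List.foldl_cons, mem_foldl_iff_of_notMem hmono hins hft] at hf
  refine ⟨hf, fun h => hfs ?_⟩
  simpa using foldl_subset_of_step_subset_insert hins s ∅ h

end Fold

theorem List.mem_prefix_iff_of_pairwise {α : Type*} {r : α → α → Prop}
    (hasymm : ∀ {a b}, r a b → ¬ r b a) {s t : List α} {f q : α}
    (hL : (s ++ f :: t).Pairwise r) (hq : q ∈ s ++ f :: t) : q ∈ s ↔ r q f := by
  rw [List.pairwise_append] at hL
  refine ⟨fun h => hL.2.2 q h f List.mem_cons_self, fun hqf => ?_⟩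
  rcases List.mem_append.mp hq with h | h
  · exact h
  · rcases List.mem_cons.mp h with rfl | h
    · exact absurd hqf (fun h' => hasymm h' h')
    · exact absurd hqf (hasymm ((List.pairwise_cons.mp hL.2.1).1 q h))

variable {N : ℕ}

theorem pairwise_toLex_lt_pairList :
    (pairList N).Pairwise (fun p q => toLex p < toLex q) := by
  unfold pairList
  rw [List.pairwise_flatMap]
  refine ⟨fun n _ => ?_, (List.pairwise_lt_finRange N).imp ?_⟩
  · rw [List.pairwise_map]
    refine ((List.pairwise_lt_finRange N).filter _).imp fun h => ?_
    exact Prod.Lex.toLex_lt_toLex.mpr (Or.inr ⟨rfl, h⟩)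
  · intro a b hab x hx y hy
    simp only [List.mem_map] at hx hy
    obtain ⟨l, _, rfl⟩ := hx
    obtain ⟨l', _, rfl⟩ := hy
    exact Prod.Lex.toLex_lt_toLex.mpr (Or.inl hab)

theorem nodup_pairList : (pairList N).Nodup :=
  pairwise_toLex_lt_pairList.imp (fun h => by rintro rfl; exact lt_irrefl _ h)

theorem fst_lt_snd_of_mem_pairList {p : Fin N × Fin N} (h : p ∈ pairList N) : p.1 < p.2 := by
  simp only [pairList, List.mem_flatMap, List.mem_map, List.mem_filter] at h
  obtain ⟨n, -, l, hl, rfl⟩ := h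
  simpa using hl.2

theorem nbhd_mono {E E' : Finset (Fin N × Fin N)} (h : E' ⊆ E) (k : Fin N) :
    nbhd E' k ⊆ nbhd E k := by
  unfold nbhd
  gcongr

theorem toLex_lt_iff_of_incident {m a x : Fin N} {f q : Fin N × Fin N}
    (hf : f = (m, a) ∨ f = (a, m)) (hf' : f.1 < f.2) (hq : q = (m, x) ∨ q = (x, m))
    (hq' : q.1 < q.2) : toLex q < toLex f ↔ x < a := by
  rcases hf with rfl | rfl <;> rcases hq with rfl | rfl <;>
    simp only [Prod.Lex.toLex_lt_toLex] at hf' hq' ⊢ <;> grind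

theorem nbhd_filter_toLex_lt {E : Finset (Fin N × Fin N)} (hE : ∀ q ∈ E, q.1 < q.2)
    {m a : Fin N} {f : Fin N × Fin N} (hf : f = (m, a) ∨ f = (a, m)) (hf' : f.1 < f.2) :
    nbhd (E.filter (fun q => toLex q < toLex f)) m = insert m ((nbhd E m).filter (· < a)) := by
  ext x
  by_cases hxm : x = m
  · simp [nbhd, hxm]
  have hlt : ∀ q ∈ E, (q = (m, x) ∨ q = (x, m)) → (toLex q < toLex f ↔ x < a) :=
    fun q hqE hq => toLex_lt_iff_of_incident hf hf' hq (hE q hqE)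
  simp only [nbhd, mem_insert, mem_filter, mem_univ, true_and, hxm, false_or]
  constructor
  · rintro (⟨h, hlex⟩ | ⟨h, hlex⟩)
    · exact ⟨Or.inl h, (hlt _ h (Or.inl rfl)).mp hlex⟩
    · exact ⟨Or.inr h, (hlt _ h (Or.inr rfl)).mp hlex⟩
  · rintro ⟨h | h, hxa⟩
    · exact Or.inl ⟨h, (hlt _ h (Or.inl rfl)).mpr hxa⟩
    · exact Or.inr ⟨h, (hlt _ h (Or.inr rfl)).mpr hxa⟩

section OrderedMatch

variable (W : Fin N → Finset (Fin N) → Finset (Fin N) → Prop)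

theorem subset_omStep (E : Finset (Fin N × Fin N)) (p : Fin N × Fin N) : E ⊆ omStep W E p := by
  unfold omStep
  split_ifs
  exacts [subset_insert _ _, subset_rfl]

theorem omStep_subset_insert (E : Finset (Fin N × Fin N)) (p : Fin N × Fin N) :
    omStep W E p ⊆ insert p E := by
  unfold omStep
  split_ifs
  exacts [subset_rfl, subset_insert _ _]

theorem omStep_accepts {E : Finset (Fin N × Fin N)} {p : Fin N × Fin N} (hpE : p ∉ E)
    (hp : p ∈ omStep W E p) :
    W p.1 (insert p.2 (nbhd E p.1)) (nbhd E p.1) ∧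
      W p.2 (insert p.1 (nbhd E p.2)) (nbhd E p.2) := by
  unfold omStep at hp
  split_ifs at hp with h
  exacts [h, absurd hp hpE]

theorem mem_pairList_of_mem_orderedMatch {q : Fin N × Fin N} (hq : q ∈ orderedMatch W) :
    q ∈ pairList N := by
  simpa using foldl_subset_of_step_subset_insert (omStep_subset_insert W) _ _ hq

theorem fst_lt_snd_of_mem_orderedMatch {q : Fin N × Fin N} (hq : q ∈ orderedMatch W) :
    q.1 < q.2 :=
  fst_lt_snd_of_mem_pairList (mem_pairList_of_mem_orderedMatch W hq)

/-- `(orderedMatch W).filter (toLex · < toLex f)` is the graph at the moment `f` is examined. -/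
theorem orderedMatch_accepts {f : Fin N × Fin N} (hf : f ∈ orderedMatch W) :
    let E := (orderedMatch W).filter (fun q => toLex q < toLex f)
    W f.1 (insert f.2 (nbhd E f.1)) (nbhd E f.1) ∧
      W f.2 (insert f.1 (nbhd E f.2)) (nbhd E f.2) := by
  obtain ⟨s, t, hst⟩ := List.append_of_mem (mem_pairList_of_mem_orderedMatch W hf)
  have hnd : (s ++ f :: t).Nodup := hst ▸ nodup_pairList
  have hG : orderedMatch W = (s ++ f :: t).foldl (omStep W) ∅ := by rw [orderedMatch, hst]
  have hprefix :
      s.foldl (omStep W) ∅ = (orderedMatch W).filter (fun q => toLex q < toLex f) := by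
    ext q
    rw [mem_filter, mem_foldl_prefix_iff (subset_omStep W) (omStep_subset_insert W) hnd, ← hG]
    refine and_congr_right fun hq => ?_
    have hsorted := pairwise_toLex_lt_pairList (N := N)
    have hqL := mem_pairList_of_mem_orderedMatch W hq
    rw [hst] at hsorted hqL
    exact List.mem_prefix_iff_of_pairwise (fun h => lt_asymm h) hsorted hqL
  rw [hG] at hf
  obtain ⟨hfstep, hfs⟩ :=
    mem_step_foldl_prefix (subset_omStep W) (omStep_subset_insert W) hnd hf
  rw [← hprefix]
  exact omStep_accepts W hfs hfstep

theorem orderedMatch_accepts_nbhd {m a : Fin N} (ha : a ∈ nbhd (orderedMatch W) m)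
    (ham : a ≠ m) :
    W m (insert a (insert m ((nbhd (orderedMatch W) m).filter (· < a))))
      (insert m ((nbhd (orderedMatch W) m).filter (· < a))) := by
  have hE : ∀ q ∈ orderedMatch W, q.1 < q.2 := fun q => fst_lt_snd_of_mem_orderedMatch W
  simp only [nbhd, mem_insert, ham, false_or, mem_filter, mem_univ, true_and] at ha
  rcases ha with h | h
  · have := (orderedMatch_accepts W h).1
    rwa [nbhd_filter_toLex_lt hE (Or.inl rfl) (hE _ h)] at this
  · have := (orderedMatch_accepts W h).2
    rwa [nbhd_filter_toLex_lt hE (Or.inr rfl) (hE _ h)] at this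

end OrderedMatch

theorem TotalPreorderOn.refl {W : Fin N → Finset (Fin N) → Finset (Fin N) → Prop}
    (hW : TotalPreorderOn W) {k : Fin N} {S : Finset (Fin N)} (hk : k ∈ S) : W k S S :=
  ((hW k).1 S S hk hk).elim id id

theorem TotalPreorderOn.trans {W : Fin N → Finset (Fin N) → Finset (Fin N) → Prop}
    (hW : TotalPreorderOn W) {k : Fin N} {S T R : Finset (Fin N)} (hST : W k S T)
    (hTR : W k T R) : W k S R :=
  (hW k).2 S T R hST hTR

theorem weakPref_of_subset_insert {W : Fin N → Finset (Fin N) → Finset (Fin N) → Prop}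
    (hW : TotalPreorderOn W) (hTop : TopAgentLabeled W) {m : Fin N} {R : Finset (Fin N)}
    (hmR : m ∉ R)
    (hacc : ∀ a ∈ R,
      W m (insert a (insert m (R.filter (· < a)))) (insert m (R.filter (· < a))))
    {T : Finset (Fin N)} (hTR : T ⊆ insert m R) (hmT : m ∈ T) : W m (insert m R) T := by
  induction R using Finset.induction_on_max generalizing T with
  | empty =>
    rw [Subset.antisymm hTR (singleton_subset_iff.mpr hmT)]
    exact hW.refl (mem_singleton_self m)
  | insert a R hlt ih =>
    have hma : m ≠ a := fun h => hmR (h ▸ mem_insert_self a R)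
    have hmR' : m ∉ R := fun h => hmR (mem_insert_of_mem h)
    have hfilter : ∀ b ∈ insert a R, (insert a R).filter (· < b) = R.filter (· < b) := by
      intro b hb
      rw [filter_insert, if_neg]
      rcases mem_insert.mp hb with rfl | hb
      exacts [lt_irrefl b, (hlt b hb).not_gt]
    have hRa : R.filter (· < a) = R := filter_true_of_mem hlt
    have hgain : W m (insert m (insert a R)) (insert m R) := by
      have := hacc a (mem_insert_self a R)
      rwa [hfilter a (mem_insert_self a R), hRa, insert_comm] at this
    have ih' : ∀ T, T ⊆ insert m R → m ∈ T → W m (insert m R) T := fun T =>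
      ih hmR' fun b hb => hfilter b (mem_insert_of_mem hb) ▸ hacc b (mem_insert_of_mem hb)
    by_cases haT : a ∈ T
    · by_cases hRT : R ⊆ T
      · rw [Subset.antisymm hTR (insert_subset hmT (insert_subset haT hRT))]
        exact hW.refl (mem_insert_self m _)
      obtain ⟨b, hbR, hbT⟩ := not_subset.mp hRT
      have hbm : b ≠ m := fun h => hmR' (h ▸ hbR)
      have hswap := (hTop m b a hbm hma.symm (hlt b hbR) (T.erase a)
        (mem_erase.mpr ⟨hma, hmT⟩) (fun h => hbT (mem_of_mem_erase h)) (notMem_erase a T)).1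
      rw [insert_erase haT] at hswap
      refine hW.trans hgain
        (hW.trans (ih' _ ?_ (mem_insert_of_mem (mem_erase.mpr ⟨hma, hmT⟩))) hswap)
      refine insert_subset (mem_insert_of_mem hbR) fun x hx => ?_
      obtain ⟨hxa, hxT⟩ := mem_erase.mp hx
      rcases mem_insert.mp (hTR hxT) with rfl | hx
      · exact mem_insert_self x R
      · exact mem_insert_of_mem ((mem_insert.mp hx).resolve_left hxa)
    · refine hW.trans hgain (ih' _ (fun x hx => ?_) hmT)
      rcases mem_insert.mp (hTR hx) with rfl | hx'
      · exact mem_insert_self x R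
      · exact mem_insert_of_mem ((mem_insert.mp hx').resolve_left (fun h => haT (h ▸ hx)))

theorem weakPref_of_subset {W : Fin N → Finset (Fin N) → Finset (Fin N) → Prop}
    (hW : TotalPreorderOn W) (hTop : TopAgentLabeled W) {m : Fin N} {S : Finset (Fin N)}
    (hmS : m ∈ S)
    (hacc : ∀ a ∈ S, a ≠ m →
      W m (insert a (insert m (S.filter (· < a)))) (insert m (S.filter (· < a))))
    {T : Finset (Fin N)} (hTS : T ⊆ S) (hmT : m ∈ T) : W m S T := by
  have hfilter : ∀ a, insert m ((S.erase m).filter (· < a)) = insert m (S.filter (· < a)) := by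
    intro a
    ext x
    by_cases hx : x = m <;> simp [hx]
  rw [← insert_erase hmS] at hTS ⊢
  refine weakPref_of_subset_insert hW hTop (notMem_erase m S) (fun a ha => ?_) hTS hmT
  rw [hfilter]
  exact hacc a (mem_of_mem_erase ha) (ne_of_mem_erase ha)

theorem stmt1_general {N : ℕ} (W : Fin N → Finset (Fin N) → Finset (Fin N) → Prop)
    (hW : TotalPreorderOn W) (hTop : TopAgentLabeled W) :
    ∀ E' ⊆ orderedMatch W, ∀ m : Fin N, W m (nbhd (orderedMatch W) m) (nbhd E' m) :=
  fun _ hE' m => weakPref_of_subset hW hTop (mem_insert_self m _)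
    (fun _ ha ham => orderedMatch_accepts_nbhd W ha ham) (nbhd_mono hE' m) (mem_insert_self m _)

/-- under the top agent property and limited complementarity, every agent weakly
prefers the ordered match outcome to any graph obtained by deleting some of its edges. -/
theorem stmt1 {N : ℕ} (W : Fin N → Finset (Fin N) → Finset (Fin N) → Prop)
    (hW : TotalPreorderOn W) (hTop : TopAgentLabeled W) (hLC : LimitedComp W) :
    ∀ E' ⊆ orderedMatch W, ∀ m : Fin N, W m (nbhd (orderedMatch W) m) (nbhd E' m) :=
  stmt1_general W hW hTop
end

section
/- A strongly stable outcome need not maximize social welfare: there exist two agents with utility functions u_1({1}) = 1, u_1({1,2}) = 0, u_2({2}) = 0, u_2({1,2}) = 10 such that the empty graph is the strongly stable outcome (and the output of the ordered match algorithm), but the graph with the edge {1,2} strictly maximizes the sum of utilities. -/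
open Finset

lemma nbhd_full (E : Finset (Fin 2 × Fin 2)) (h : (0,1) ∈ E ∨ (1,0) ∈ E) :
    nbhd E 0 = {0,1} ∧ nbhd E 1 = {0,1} := by
  constructor <;> · ext x; fin_cases x <;> simp [nbhd] <;> tauto

lemma nbhd_sing (E : Finset (Fin 2 × Fin 2)) (h0 : (0,1) ∉ E) (h1 : (1,0) ∉ E) :
    nbhd E 0 = {0} ∧ nbhd E 1 = {1} := by
  constructor <;> · ext x; fin_cases x <;> simp [nbhd] <;> tauto

/-- a strongly stable outcome need not maximize social welfare. With two agents
and utilities u₁({1}) = 1, u₁({1,2}) = 0, u₂({2}) = 0, u₂({1,2}) = 10, the empty graph is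
strongly stable and is the output of the ordered match algorithm, but the graph with the
single edge {1,2} strictly maximizes the sum of utilities. -/
theorem stmt7 (u : Fin 2 → Finset (Fin 2) → ℝ)
    (hu1a : u 0 ({0} : Finset (Fin 2)) = 1) (hu1b : u 0 ({0, 1} : Finset (Fin 2)) = 0)
    (hu2a : u 1 ({1} : Finset (Fin 2)) = 0) (hu2b : u 1 ({0, 1} : Finset (Fin 2)) = 10)
    (W : Fin 2 → Finset (Fin 2) → Finset (Fin 2) → Prop)
    (hW : ∀ k S T, W k S T ↔ u k T ≤ u k S) :
    StronglyStable W (∅ : Finset (Fin 2 × Fin 2)) ∧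
    orderedMatch W = (∅ : Finset (Fin 2 × Fin 2)) ∧
    (∀ E : Finset (Fin 2 × Fin 2),
      ∑ m : Fin 2, u m (nbhd E m) ≤
        ∑ m : Fin 2, u m (nbhd ({((0 : Fin 2), (1 : Fin 2))} : Finset (Fin 2 × Fin 2)) m)) ∧
    (∑ m : Fin 2, u m (nbhd (∅ : Finset (Fin 2 × Fin 2)) m) <
      ∑ m : Fin 2, u m (nbhd ({((0 : Fin 2), (1 : Fin 2))} : Finset (Fin 2 × Fin 2)) m)) := by
  
  have hne : (0:Fin 2) ≠ 1 := by decide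
  have hE0 : nbhd (∅ : Finset (Fin 2 × Fin 2)) 0 = {0} ∧ nbhd (∅ : Finset (Fin 2 × Fin 2)) 1 = {1} :=
    nbhd_sing _ (by simp) (by simp)
  have hE1 : nbhd ({((0:Fin 2),(1:Fin 2))} : Finset (Fin 2 × Fin 2)) 0 = {0,1} ∧
      nbhd ({((0:Fin 2),(1:Fin 2))} : Finset (Fin 2 × Fin 2)) 1 = {0,1} :=
    nbhd_full _ (by simp)
  have hsum1 : ∑ m : Fin 2, u m (nbhd ({((0:Fin 2),(1:Fin 2))} : Finset (Fin 2 × Fin 2)) m) = 10 := by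
    rw [Fin.sum_univ_two, hE1.1, hE1.2, hu1b, hu2b]; ring
  refine ⟨?_, ?_, ?_, ?_⟩
  · rintro ⟨C, E', hC, hnew, _, hweak, m, hm, hs1, hs2⟩
    by_cases hedge : (0,1) ∈ E' ∨ (1,0) ∈ E'
    · have h0C : (0:Fin 2) ∈ C := by
        rcases hedge with h | h
        · exact (hnew _ h (by simp)).1
        · exact (hnew _ h (by simp)).2
      have := hweak 0 h0C
      rw [(nbhd_full E' hedge).1, hE0.1, hW] at this
      rw [hu1a, hu1b] at this; linarith
    · push_neg at hedge
      have h := nbhd_sing E' hedge.1 hedge.2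
      have hm2 : m = 0 ∨ m = 1 := by omega
      rcases hm2 with rfl | rfl
      · rw [h.1, hE0.1, hW] at hs1 hs2; exact hs2 hs1
      · rw [h.2, hE0.2, hW] at hs1 hs2; exact hs2 hs1
  · have hp : pairList 2 = [((0:Fin 2),(1:Fin 2))] := by decide
    rw [orderedMatch, hp]
    simp only [List.foldl]
    rw [omStep, if_neg]
    rintro ⟨h1, -⟩
    rw [hE0.1] at h1
    have : (insert (1:Fin 2) ({0} : Finset (Fin 2))) = {0,1} := by decide
    rw [this, hW, hu1a, hu1b] at h1
    linarith
  · intro E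
    rw [hsum1, Fin.sum_univ_two]
    by_cases hedge : (0,1) ∈ E ∨ (1,0) ∈ E
    · rw [(nbhd_full E hedge).1, (nbhd_full E hedge).2, hu1b, hu2b]; linarith
    · push_neg at hedge
      rw [(nbhd_sing E hedge.1 hedge.2).1, (nbhd_sing E hedge.1 hedge.2).2, hu1a, hu2a]
      linarith
  · rw [hsum1, Fin.sum_univ_two, hE0.1, hE0.2, hu1a, hu2a]
    linarith
end

section
/- In the unidirectional data sharing market with additive sharing costs, the prices p_i(j) = c_i(j) (agent i charges c_i(j) for selling its data to agent j) constitute competitive prices: given these prices, each agent i's utility is independent of its supply set S_i^O, its optimal demand set is any maximizer of U_i(S_i^I) − Σ_{j∈S_i^I} c_j(i), and supply can be chosen to exactly clear the market. -/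
open Finset

/-- In-neighborhood of `i` in the directed sharing graph `E`: the agents whose data `i`
receives (an edge `(j, i)` means `j` shares its data with `i`). -/
def inN {N : ℕ} (E : Finset (Fin N × Fin N)) (i : Fin N) : Finset (Fin N) :=
  Finset.univ.filter (fun j => (j, i) ∈ E)

/-- Out-neighborhood of `i` in the directed sharing graph `E`: the agents who receive
`i`'s data. -/
def outN {N : ℕ} (E : Finset (Fin N × Fin N)) (i : Fin N) : Finset (Fin N) :=
  Finset.univ.filter (fun j => (i, j) ∈ E)

/-- Net payment of agent `i` under posted prices `p_i(j) = c_i(j)`: it pays `c_j(i)` for each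
seller `j` it buys from and receives `c_i(j)` from each buyer `j` of its data. -/
def payment {N : ℕ} (c : Fin N → Fin N → ℝ) (E : Finset (Fin N × Fin N)) (i : Fin N) : ℝ :=
  (∑ j ∈ inN E i, c j i) - (∑ j ∈ outN E i, c i j)

/-- Quasilinear net utility of agent `i` under the prices `p_i(j) = c_i(j)`:
`U_i(S_i^I) - C_i(S_i^O) - t_i` with additive cost `C_i(S_i^O) = Σ_{j ∈ S_i^O} c_i(j)`. -/
def netU {N : ℕ} (U : Fin N → Finset (Fin N) → ℝ) (c : Fin N → Fin N → ℝ)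
    (E : Finset (Fin N × Fin N)) (i : Fin N) : ℝ :=
  U i (inN E i) - (∑ j ∈ outN E i, c i j) - payment c E i

/-- with additive sharing costs, the prices `p_i(j) = c_i(j)` are competitive:
each agent's net utility simplifies to `U_i(S_i^I) - Σ_{j ∈ S_i^I} c_j(i)` and is independent
of its supply set; its optimal demand set is any maximizer of `U_i(S) - Σ_{j ∈ S} c_j(i)`;
and supply can be chosen to exactly clear the market for any profile of demand sets. -/
theorem stmt8 {N : ℕ} (U : Fin N → Finset (Fin N) → ℝ) (c : Fin N → Fin N → ℝ)
    (hc : ∀ i j, 0 ≤ c i j) :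
    -- the net utility simplifies and depends only on the demand (in-neighborhood) side
    (∀ (i : Fin N) (E : Finset (Fin N × Fin N)),
      netU U c E i = U i (inN E i) - ∑ j ∈ inN E i, c j i) ∧
    (∀ (i : Fin N) (E E' : Finset (Fin N × Fin N)),
      inN E i = inN E' i → netU U c E i = netU U c E' i) ∧
    -- optimal demand: agent `i`'s utility is maximal iff its demand set maximizes
    -- `U_i(S) - Σ_{j ∈ S} c_j(i)`
    (∀ (i : Fin N) (E : Finset (Fin N × Fin N)),
      (∀ E' : Finset (Fin N × Fin N), netU U c E' i ≤ netU U c E i) ↔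
      (∀ S : Finset (Fin N), U i S - ∑ j ∈ S, c j i ≤
        U i (inN E i) - ∑ j ∈ inN E i, c j i)) ∧
    -- market clearing: for any profile of demand sets there is a graph realizing them,
    -- with supply uniquely determined as `S_i^O = {j : i ∈ S_j^I}`
    (∀ D : Fin N → Finset (Fin N), ∃ E : Finset (Fin N × Fin N),
      ∀ i : Fin N, inN E i = D i ∧
        outN E i = Finset.univ.filter (fun j => i ∈ D j)) := by
  have key : ∀ (i : Fin N) (E : Finset (Fin N × Fin N)),
      netU U c E i = U i (inN E i) - ∑ j ∈ inN E i, c j i := by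
    intro i E; unfold netU payment; ring
  have realize : ∀ (i : Fin N) (S : Finset (Fin N)),
      inN (S.image (fun j => (j, i))) i = S := by
    intro i S
    ext j
    simp [inN, Finset.mem_image]
  refine ⟨key, ?_, ?_, ?_⟩
  · intro i E E' h; rw [key, key, h]
  · intro i E
    constructor
    · intro h S
      have := h (S.image (fun j => (j, i)))
      rwa [key, key, realize] at this
    · intro h E'
      rw [key, key]; exact h _
  · intro D
    refine ⟨Finset.univ.filter (fun p => p.1 ∈ D p.2), fun i => ⟨?_, ?_⟩⟩
    · ext j; simp [inN]
    · ext j; simp [outN]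
end

section
/- In the unidirectional data sharing market with additive costs and prices p_i(j) = c_i(j), every social-welfare-maximizing directed graph G*, combined with the induced payments, is a stable outcome: no coalition of agents can rearrange trades among themselves (with any side payments among the coalition) so that all members are weakly better off and at least one is strictly better off. -/
open Finset

lemma sumout_eq_sumin {N : ℕ} (c : Fin N → Fin N → ℝ) (E : Finset (Fin N × Fin N)) :
    (∑ i : Fin N, ∑ j ∈ outN E i, c i j) = ∑ i : Fin N, ∑ j ∈ inN E i, c j i := by
  simp only [outN, inN, Finset.sum_filter]
  rw [Finset.sum_comm]

lemma per_agent_opt {N : ℕ} (U : Fin N → Finset (Fin N) → ℝ) (c : Fin N → Fin N → ℝ)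
    (Estar : Finset (Fin N × Fin N)) (hloop : ∀ i : Fin N, (i, i) ∉ Estar)
    (hmax : ∀ E : Finset (Fin N × Fin N), (∀ i : Fin N, (i, i) ∉ E) →
      (∑ i : Fin N, (U i (inN E i) - ∑ j ∈ outN E i, c i j)) ≤
      (∑ i : Fin N, (U i (inN Estar i) - ∑ j ∈ outN Estar i, c i j)))
    (i : Fin N) (S : Finset (Fin N)) (hiS : i ∉ S) :
    U i S - ∑ j ∈ S, c j i ≤ U i (inN Estar i) - ∑ j ∈ inN Estar i, c j i := by
  set E : Finset (Fin N × Fin N) :=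
    Estar.filter (fun e => e.2 ≠ i) ∪ S.image (fun j => (j, i)) with hE
  have hEloop : ∀ k : Fin N, (k, k) ∉ E := by
    intro k hk
    rw [hE, mem_union] at hk
    rcases hk with hk | hk
    · exact hloop k (mem_filter.mp hk).1
    · obtain ⟨j, hj, hjk⟩ := mem_image.mp hk
      have h1 : j = k := congrArg Prod.fst hjk
      have h2 : i = k := congrArg Prod.snd hjk
      exact hiS (by rw [h2, ← h1]; exact hj)
  have hin : ∀ k : Fin N, inN E k = if k = i then S else inN Estar k := by
    intro k
    by_cases hk : k = i
    · subst hk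
      ext j
      simp [inN, hE, Finset.mem_union, Finset.mem_filter, Finset.mem_image]
    · simp only [if_neg hk]
      ext j
      simp [inN, hE, Finset.mem_union, Finset.mem_filter, Finset.mem_image, hk, Ne.symm hk]
  have h1 := hmax E hEloop
  rw [show (∑ k : Fin N, (U k (inN E k) - ∑ j ∈ outN E k, c k j)) =
      ∑ k : Fin N, (U k (inN E k) - ∑ j ∈ inN E k, c j k) by
    rw [Finset.sum_sub_distrib, Finset.sum_sub_distrib, sumout_eq_sumin],
    show (∑ k : Fin N, (U k (inN Estar k) - ∑ j ∈ outN Estar k, c k j)) =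
      ∑ k : Fin N, (U k (inN Estar k) - ∑ j ∈ inN Estar k, c j k) by
    rw [Finset.sum_sub_distrib, Finset.sum_sub_distrib, sumout_eq_sumin]] at h1
  have h2 : ∀ k : Fin N, (U k (inN E k) - ∑ j ∈ inN E k, c j k) =
      Function.update (fun k => U k (inN Estar k) - ∑ j ∈ inN Estar k, c j k) i
        (U i S - ∑ j ∈ S, c j i) k := by
    intro k
    rw [hin k]
    by_cases hk : k = i
    · subst hk; simp [Function.update_self]
    · simp [Function.update_of_ne hk, hk]
  rw [Finset.sum_congr rfl (fun k _ => h2 k), Finset.sum_update_of_mem (mem_univ i)] at h1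
  have h3 : (∑ k : Fin N, (U k (inN Estar k) - ∑ j ∈ inN Estar k, c j k)) =
      (∑ k ∈ univ \ {i}, (U k (inN Estar k) - ∑ j ∈ inN Estar k, c j k)) +
      (U i (inN Estar i) - ∑ j ∈ inN Estar i, c j i) := by
    exact Finset.sum_eq_sum_sdiff_singleton_add (mem_univ i) _
  linarith [h1, h3.symm ▸ h1]

/-- with additive costs and prices `p_i(j) = c_i(j)`, any social-welfare
maximizing (loopless) directed graph `E*`, together with the induced payments, is stable:
no nonempty coalition can rearrange trades among its members, with budget-balanced side
payments within the coalition, so that all members are weakly better off and at least one is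
strictly better off. -/
theorem stmt10 {N : ℕ} (U : Fin N → Finset (Fin N) → ℝ) (c : Fin N → Fin N → ℝ)
    (hc : ∀ i j, 0 ≤ c i j)
    (Estar : Finset (Fin N × Fin N)) (hloop : ∀ i : Fin N, (i, i) ∉ Estar)
    (hmax : ∀ E : Finset (Fin N × Fin N), (∀ i : Fin N, (i, i) ∉ E) →
      (∑ i : Fin N, (U i (inN E i) - ∑ j ∈ outN E i, c i j)) ≤
      (∑ i : Fin N, (U i (inN Estar i) - ∑ j ∈ outN Estar i, c i j))) :
    ¬ ∃ (C : Finset (Fin N)) (E' : Finset (Fin N × Fin N)) (τ : Fin N → ℝ),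
        C.Nonempty ∧
        -- the coalition only forms trades among its own members (no self-trades)
        (∀ e ∈ E', e.1 ∈ C ∧ e.2 ∈ C ∧ e.1 ≠ e.2) ∧
        -- side payments are budget balanced within the coalition
        (∑ i ∈ C, τ i) = 0 ∧
        -- every member weakly prefers the deviation; here equilibrium utility under the
        -- competitive prices is `U_i(S_i^I) - Σ_{j ∈ S_i^I} c_j(i)`
        (∀ i ∈ C,
          (U i (inN Estar i) - ∑ j ∈ inN Estar i, c j i) ≤
          (U i (inN E' i) - (∑ j ∈ outN E' i, c i j) - τ i)) ∧
        -- and some member strictly prefers it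
        (∃ i ∈ C,
          (U i (inN Estar i) - ∑ j ∈ inN Estar i, c j i) <
          (U i (inN E' i) - (∑ j ∈ outN E' i, c i j) - τ i)) := by
  rintro ⟨C, E', τ, hne, hcoal, hbal, hweak, i0, hi0C, hstrict⟩
  -- sum the coalition inequalities
  have hsum : (∑ i ∈ C, (U i (inN Estar i) - ∑ j ∈ inN Estar i, c j i)) <
      ∑ i ∈ C, (U i (inN E' i) - (∑ j ∈ outN E' i, c i j) - τ i) :=
    Finset.sum_lt_sum hweak ⟨i0, hi0C, hstrict⟩
  -- edges of E' live inside C, so coalition sums equal full sums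
  have hout0 : ∀ i ∉ C, outN E' i = ∅ := by
    intro i hi
    apply Finset.filter_eq_empty_iff.mpr
    intro j _ hj
    exact hi (hcoal _ hj).1
  have hin0 : ∀ i ∉ C, inN E' i = ∅ := by
    intro i hi
    apply Finset.filter_eq_empty_iff.mpr
    intro j _ hj
    exact hi (hcoal _ hj).2.1
  have hedge : (∑ i ∈ C, ∑ j ∈ outN E' i, c i j) = ∑ i ∈ C, ∑ j ∈ inN E' i, c j i := by
    rw [Finset.sum_subset (subset_univ C) (fun i _ hi => by rw [hout0 i hi]; simp),
        Finset.sum_subset (subset_univ C) (fun i _ hi => by rw [hin0 i hi]; simp)]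
    exact sumout_eq_sumin c E'
  -- each member's deviation bundle is weakly worse at competitive prices
  have hbound : ∀ i ∈ C, (U i (inN E' i) - ∑ j ∈ inN E' i, c j i) ≤
      U i (inN Estar i) - ∑ j ∈ inN Estar i, c j i := by
    intro i _
    apply per_agent_opt U c Estar hloop hmax
    intro h
    exact (hcoal _ ((Finset.mem_filter.mp h).2)).2.2 rfl
  have hsum2 : (∑ i ∈ C, (U i (inN E' i) - ∑ j ∈ inN E' i, c j i)) ≤
      ∑ i ∈ C, (U i (inN Estar i) - ∑ j ∈ inN Estar i, c j i) :=
    Finset.sum_le_sum hbound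
  have hexp : (∑ i ∈ C, (U i (inN E' i) - (∑ j ∈ outN E' i, c i j) - τ i)) =
      ∑ i ∈ C, (U i (inN E' i) - ∑ j ∈ inN E' i, c j i) := by
    simp only [Finset.sum_sub_distrib, hbal, hedge, sub_zero]
  rw [hexp] at hsum
  linarith
end
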